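/- The collection of U-measurable subsets of κ^ω is closed under Suslin's operation A. -/

import Mathlib

universe u

namespace UMeas

variable {A : Type u}

/-- The first `n` values of an infinite sequence, as a list. -/
def seg (s : ℕ → A) (n : ℕ) : List A := List.ofFn (fun i : Fin n => s i)

/-- `T` is a `U`-branching tree: a set of finite sequences closed under initial
segments, containing the empty sequence, whose branching sets are in `U`. -/
def IsUTree (U : Ultrafilter A) (T : Set (List A)) : Prop :=
  ([] ∈ T) ∧ (∀ σ ∈ T, ∀ τ : List A, τ <+: σ → τ ∈ T) ∧
    ∀ σ ∈ T, {a : A | σ ++ [a] ∈ T} ∈ U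

/-- The set of infinite branches through `T`. -/
def branches (T : Set (List A)) : Set (ℕ → A) := {s | ∀ n, seg s n ∈ T}

/-- Concatenation `σ⌢s` of a finite sequence with an infinite sequence. -/
def app (σ : List A) (s : ℕ → A) : ℕ → A :=
  fun n => if h : n < σ.length then σ.get ⟨n, h⟩ else s (n - σ.length)

/-- The section `X↾σ = {s | σ⌢s ∈ X}`. -/
def sect (X : Set (ℕ → A)) (σ : List A) : Set (ℕ → A) := {s | app σ s ∈ X}

def ULarge (U : Ultrafilter A) (X : Set (ℕ → A)) : Prop :=
  ∃ T, IsUTree U T ∧ branches T ⊆ X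

def USmall (U : Ultrafilter A) (X : Set (ℕ → A)) : Prop :=
  ∃ T, IsUTree U T ∧ branches T ∩ X = ∅

def UDetermined (U : Ultrafilter A) (X : Set (ℕ → A)) : Prop :=
  ULarge U X ∨ USmall U X

def UNull (U : Ultrafilter A) (X : Set (ℕ → A)) : Prop :=
  ∀ σ : List A, USmall U (sect X σ)

def UMeasurable (U : Ultrafilter A) (X : Set (ℕ → A)) : Prop :=
  ∀ σ : List A, UDetermined U (sect X σ)

end UMeas

/-!
The `U`-measurable sets form a σ-algebra, the `U`-null sets a σ-ideal in it (countable unions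
by fusion of trees), and every set `X` has a measurable hull `H ⊇ X` whose measurable subsets
disjoint from `X` are null. In this setting Marczewski's argument applies: take hulls
`H τ ⊆ P τ` of the partial kernels `⋃_{f ⊒ τ} ⋂ₙ P (f↾n)`; each `H τ \ ⋃ₖ H (τ⌢k)` is null,
and a point of `H []` outside all of them follows an infinite path through the `H τ`, so it
lies in the kernel.

Both the σ-algebra and the hulls come from the topology with basic open sets `σ⌢[T]`: `X` is
measurable iff `X` minus its interior is null, and every interior is measurable.
-/

namespace UMeas

open Set Filter
open scoped symmDiff

section Sequences

variable {A : Type u}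

def shift (n : ℕ) (s : ℕ → A) : ℕ → A := fun m => s (n + m)

@[simp] lemma length_seg (s : ℕ → A) (n : ℕ) : (seg s n).length = n := List.length_ofFn

lemma seg_add (s : ℕ → A) (n m : ℕ) : seg s (n + m) = seg s n ++ seg (shift n s) m := by
  simp only [seg, shift, List.ofFn_add]
  rfl

lemma seg_succ (s : ℕ → A) (n : ℕ) : seg s (n + 1) = seg s n ++ [s n] := by
  rw [seg_add]
  rfl

lemma seg_one_add (s : ℕ → A) (m : ℕ) : seg s (1 + m) = s 0 :: seg (shift 1 s) m := by
  rw [seg_add]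
  rfl

lemma take_seg (s : ℕ → A) (n m : ℕ) : (seg s (n + m)).take n = seg s n := by
  rw [seg_add, List.take_left' (length_seg s n)]

lemma drop_seg (s : ℕ → A) (n m : ℕ) : (seg s (n + m)).drop n = seg (shift n s) m := by
  rw [seg_add, List.drop_left' (length_seg s n)]

lemma app_seg_shift (s : ℕ → A) (n : ℕ) : app (seg s n) (shift n s) = s := by
  funext i
  rcases lt_or_ge i n with h | h
  · simp [app, seg, h]
  · simp [app, shift, Nat.not_lt.2 h, Nat.add_sub_cancel' h]

lemma seg_app_length (σ : List A) (s : ℕ → A) : seg (app σ s) σ.length = σ :=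
  List.ext_getElem (by simp) fun i hi _ => by simp_all [app, seg]

lemma shift_app (σ : List A) (s : ℕ → A) : shift σ.length (app σ s) = s := by
  funext m
  simp [shift, app]

lemma seg_app_add (σ : List A) (s : ℕ → A) (m : ℕ) :
    seg (app σ s) (σ.length + m) = σ ++ seg s m := by
  rw [seg_add, seg_app_length, shift_app]

lemma seg_app_of_le (σ : List A) (s : ℕ → A) {n : ℕ} (h : n ≤ σ.length) :
    seg (app σ s) n = σ.take n := by
  obtain ⟨k, hk⟩ := Nat.exists_eq_add_of_le h
  conv_rhs => rw [← seg_app_length σ s, hk, take_seg]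

lemma app_append (σ τ : List A) (s : ℕ → A) : app (σ ++ τ) s = app σ (app τ s) := by
  funext n
  simp only [app, List.length_append, List.get_eq_getElem, List.getElem_append]
  split_ifs <;> first | rfl | omega | (congr 1; omega)

lemma sect_sect (X : Set (ℕ → A)) (σ τ : List A) : sect (sect X σ) τ = sect X (σ ++ τ) := by
  ext s
  simp [sect, app_append]

lemma sect_iUnion {ι : Sort*} (X : ι → Set (ℕ → A)) (σ : List A) :
    sect (⋃ i, X i) σ = ⋃ i, sect (X i) σ :=
  preimage_iUnion

lemma exists_seq_forall_seg {C : List A → Prop} (h₀ : C [])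
    (step : ∀ τ, C τ → ∃ a, C (τ ++ [a])) : ∃ f : ℕ → A, ∀ n, C (seg f n) := by
  have : Nonempty A := ⟨(step [] h₀).choose⟩
  choose! next hnext using step
  let g : ℕ → List A := fun n => Nat.rec [] (fun _ τ => τ ++ [next τ]) n
  have hg : ∀ n, C (g n) := fun n => Nat.rec h₀ (fun _ ih => hnext _ ih) n
  have hseg : ∀ n, seg (fun n => next (g n)) n = g n := by
    intro n
    induction n with
    | zero => rfl
    | succ n ih => rw [seg_succ, ih]
  exact ⟨fun n => next (g n), fun n => hseg n ▸ hg n⟩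

end Sequences

section Trees

variable {A : Type u} {U : Ultrafilter A}

lemma isUTree_univ : IsUTree U univ :=
  ⟨trivial, fun _ _ _ _ => trivial, fun _ _ => univ_mem⟩

lemma IsUTree.inter {T₁ T₂ : Set (List A)} (h₁ : IsUTree U T₁) (h₂ : IsUTree U T₂) :
    IsUTree U (T₁ ∩ T₂) :=
  ⟨⟨h₁.1, h₂.1⟩, fun σ hσ τ hτ => ⟨h₁.2.1 σ hσ.1 τ hτ, h₂.2.1 σ hσ.2 τ hτ⟩,
    fun σ hσ => inter_mem (h₁.2.2 σ hσ.1) (h₂.2.2 σ hσ.2)⟩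

lemma branches_inter (T₁ T₂ : Set (List A)) :
    branches (T₁ ∩ T₂) = branches T₁ ∩ branches T₂ := by
  ext s
  exact ⟨fun h => ⟨fun n => (h n).1, fun n => (h n).2⟩, fun h n => ⟨h.1 n, h.2 n⟩⟩

lemma ULarge.sect_seg {X : Set (ℕ → A)} {T : Set (List A)} (hT : IsUTree U T)
    (hTX : branches T ⊆ X) {s : ℕ → A} (hs : s ∈ branches T) (n : ℕ) :
    ULarge U (sect X (seg s n)) := by
  refine ⟨{τ | seg s n ++ τ ∈ T}, ⟨by simpa using hs n, fun σ hσ τ hτ => ?_, fun σ hσ => ?_⟩, ?_⟩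
  · exact hT.2.1 _ hσ _ ((List.prefix_append_right_inj _).2 hτ)
  · simpa [List.append_assoc] using hT.2.2 _ hσ
  · refine fun r hr => hTX fun m => ?_
    rcases le_total m n with hmn | hnm
    · rw [seg_app_of_le _ _ (by simpa using hmn)]
      exact hT.2.1 _ (hs n) _ (List.take_prefix _ _)
    · obtain ⟨k, rfl⟩ := Nat.exists_eq_add_of_le hnm
      have happ := seg_app_add (seg s n) r k
      rw [length_seg] at happ
      exact happ ▸ hr k

lemma ULarge.of_eventually_sect {X : Set (ℕ → A)} (h : ∀ᶠ a in U, ULarge U (sect X [a])) :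
    ULarge U X := by
  choose! T hT hTX using fun a (ha : ULarge U (sect X [a])) => ha
  refine ⟨{τ | ∀ a r, τ = a :: r → ULarge U (sect X [a]) ∧ r ∈ T a},
    ⟨by simp, fun σ hσ τ hτ => ?_, fun σ hσ => ?_⟩, fun s hs => ?_⟩
  · rintro a r rfl
    obtain ⟨w, rfl⟩ := hτ
    obtain ⟨ha, hrw⟩ := hσ a (r ++ w) rfl
    exact ⟨ha, (hT a ha).2.1 _ hrw r ⟨w, rfl⟩⟩
  · rcases σ with _ | ⟨a, r⟩
    · filter_upwards [h] with a ha
      simp only [List.nil_append, List.cons.injEq, and_imp]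
      rintro _ _ rfl rfl
      exact ⟨ha, (hT a ha).1⟩
    · obtain ⟨ha, hr⟩ := hσ a r rfl
      filter_upwards [(hT a ha).2.2 r hr] with b hb
      simp only [List.cons_append, List.cons.injEq, and_imp]
      rintro _ _ rfl rfl
      exact ⟨ha, hb⟩
  · have hbr : ∀ m, ULarge U (sect X [s 0]) ∧ seg (shift 1 s) m ∈ T (s 0) := fun m =>
      hs (1 + m) _ _ (seg_one_add s m)
    have happ : app (seg s 1) (shift 1 s) ∈ X := hTX (s 0) (hbr 0).1 fun m => (hbr m).2
    rwa [app_seg_shift] at happ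

end Trees

section Null

variable {A : Type u} {U : Ultrafilter A}

lemma USmall.mono {X Y : Set (ℕ → A)} (h : USmall U X) (hYX : Y ⊆ X) : USmall U Y := by
  obtain ⟨T, hT, hTX⟩ := h
  exact ⟨T, hT, subset_empty_iff.1 (hTX ▸ inter_subset_inter_right _ hYX)⟩

lemma USmall.union {X Y : Set (ℕ → A)} (hX : USmall U X) (hY : USmall U Y) :
    USmall U (X ∪ Y) := by
  obtain ⟨T₁, hT₁, hX⟩ := hX
  obtain ⟨T₂, hT₂, hY⟩ := hY
  refine ⟨T₁ ∩ T₂, hT₁.inter hT₂, ?_⟩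
  rw [branches_inter, inter_union_distrib_left]
  exact union_empty_iff.2 ⟨subset_empty_iff.1 (hX ▸ inter_subset_inter_left _ inter_subset_left),
    subset_empty_iff.1 (hY ▸ inter_subset_inter_left _ inter_subset_right)⟩

lemma UNull.mono {X Y : Set (ℕ → A)} (h : UNull U X) (hYX : Y ⊆ X) : UNull U Y :=
  fun σ => (h σ).mono fun _ hs => hYX hs

lemma UNull.sect {X : Set (ℕ → A)} (h : UNull U X) (ρ : List A) : UNull U (sect X ρ) :=
  fun σ => sect_sect X ρ σ ▸ h (ρ ++ σ)

lemma uNull_empty : UNull U (∅ : Set (ℕ → A)) :=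
  fun _ => ⟨univ, isUTree_univ, eq_empty_of_subset_empty fun _ h => h.2⟩

/-- Fusion: past stage `n`, the tree `T` follows the tree witnessing that the section of `X n`
at the stem of length `n` is small. -/
lemma USmall.iUnion_of_uNull {X : ℕ → Set (ℕ → A)} (h : ∀ n, UNull U (X n)) :
    USmall U (⋃ n, X n) := by
  choose S hS hSX using h
  let T : Set (List A) := {τ | ∀ n ≤ τ.length, τ.drop n ∈ S n (τ.take n)}
  have hT : IsUTree U T := by
    refine ⟨fun n hn => ?_, fun σ hσ τ hτ n hn => ?_, fun τ hτ => ?_⟩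
    · obtain rfl : n = 0 := by simpa using hn
      exact (hS 0 []).1
    · obtain ⟨w, rfl⟩ := hτ
      have hσn := hσ n (by simp; omega)
      rw [List.take_append_of_le_length hn, List.drop_append_of_le_length hn] at hσn
      exact (hS n _).2.1 _ hσn _ ⟨w, rfl⟩
    · have hstep : ∀ᶠ a in U, ∀ n ∈ Iic τ.length, τ.drop n ++ [a] ∈ S n (τ.take n) :=
        (eventually_all_finite (finite_Iic _)).2 fun n hn => (hS n _).2.2 _ (hτ n hn)
      filter_upwards [hstep] with a ha n hn
      rcases Nat.lt_or_ge τ.length n with hlt | hle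
      · obtain rfl : n = τ.length + 1 := by simp at hn; omega
        rw [List.drop_of_length_le (by simp), List.take_of_length_le (by simp)]
        exact (hS _ _).1
      · rw [List.take_append_of_le_length hle, List.drop_append_of_le_length hle]
        exact ha n hle
  refine ⟨T, hT, eq_empty_of_subset_empty ?_⟩
  rintro s ⟨hs, hsX⟩
  obtain ⟨n, hn⟩ := mem_iUnion.1 hsX
  have hbr : shift n s ∈ branches (S n (seg s n)) := fun m => by
    simpa only [drop_seg, take_seg] using hs (n + m) n (by simp)
  have happ : app (seg s n) (shift n s) ∈ X n := by rwa [app_seg_shift]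
  exact ((hSX n (seg s n)).subset ⟨hbr, happ⟩ : shift n s ∈ (∅ : Set (ℕ → A))).elim

lemma UNull.iUnion {ι : Sort*} [Countable ι] {X : ι → Set (ℕ → A)} (h : ∀ i, UNull U (X i)) :
    UNull U (⋃ i, X i) := by
  rcases isEmpty_or_nonempty ι with hι | hι
  · rw [iUnion_of_empty]
    exact uNull_empty
  obtain ⟨g, hg⟩ := exists_surjective_nat ι
  intro σ
  rw [← hg.iUnion_comp, sect_iUnion]
  exact USmall.iUnion_of_uNull fun n => (h (g n)).sect σ

end Null

section Measurable

variable {A : Type u} {U : Ultrafilter A}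

/-- The interior of `X` in the topology with basic open sets `σ⌢[T]`, `T` `U`-branching. -/
def uInterior (U : Ultrafilter A) (X : Set (ℕ → A)) : Set (ℕ → A) :=
  {t | ∃ σ T, IsUTree U T ∧ branches T ⊆ sect X σ ∧ t ∈ app σ '' branches T}

lemma uInterior_subset (X : Set (ℕ → A)) : uInterior U X ⊆ X := by
  rintro _ ⟨σ, T, -, hTX, s, hs, rfl⟩
  exact hTX hs

lemma uInterior_mono {X Y : Set (ℕ → A)} (h : X ⊆ Y) : uInterior U X ⊆ uInterior U Y := by
  rintro _ ⟨σ, T, hT, hTX, ht⟩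
  exact ⟨σ, T, hT, hTX.trans fun _ hs => h hs, ht⟩

lemma app_mem_uInterior {X : Set (ℕ → A)} {T : Set (List A)} {σ : List A} (hT : IsUTree U T)
    (hTX : branches T ⊆ sect X σ) {s : ℕ → A} (hs : s ∈ branches T) :
    app σ s ∈ uInterior U X :=
  ⟨σ, T, hT, hTX, s, hs, rfl⟩

lemma exists_forall_uLarge_of_mem_uInterior {X : Set (ℕ → A)} {t : ℕ → A}
    (ht : t ∈ uInterior U X) : ∃ n, ∀ m, ULarge U (sect X (seg t (n + m))) := by
  obtain ⟨σ, T, hT, hTX, s, hs, rfl⟩ := ht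
  refine ⟨σ.length, fun m => ?_⟩
  rw [seg_app_add, ← sect_sect]
  exact ULarge.sect_seg hT hTX hs m

/-- If a section `X↾ρ` is not `U`-large, the nodes `τ` with no `U`-large `X↾(ρ⌢τ')` for
`τ' ⊑ τ` form a `U`-branching tree (by amalgamation), and no branch of it enters the
interior. -/
theorem uMeasurable_uInterior (X : Set (ℕ → A)) : UMeasurable U (uInterior U X) := by
  intro ρ
  by_cases hρ : ULarge U (sect X ρ)
  · obtain ⟨T, hT, hTX⟩ := hρ
    exact Or.inl ⟨T, hT, fun s hs => app_mem_uInterior hT hTX hs⟩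
  let T₀ : Set (List A) := {τ | ∀ τ', τ' <+: τ → ¬ ULarge U (sect X (ρ ++ τ'))}
  have hT₀ : IsUTree U T₀ := by
    refine ⟨fun τ' h => ?_, fun σ hσ τ hτ τ' h => hσ τ' (h.trans hτ), fun τ hτ => ?_⟩
    · rwa [List.prefix_nil.1 h, List.append_nil]
    have hnot : ∀ᶠ a in U, ¬ ULarge U (sect X (ρ ++ τ ++ [a])) := by
      refine Ultrafilter.eventually_not.2 fun h => hτ τ List.prefix_rfl ?_
      exact ULarge.of_eventually_sect (by simpa only [sect_sect] using h)
    filter_upwards [hnot] with a ha τ' h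
    rcases List.prefix_concat_iff.1 h with rfl | h
    · rwa [← List.append_assoc]
    · exact hτ τ' h
  refine Or.inr ⟨T₀, hT₀, eq_empty_of_subset_empty ?_⟩
  rintro s ⟨hs, hsX⟩
  obtain ⟨n, hn⟩ := exists_forall_uLarge_of_mem_uInterior hsX
  have hlarge := hn ρ.length
  rw [add_comm, seg_app_add] at hlarge
  exact hs n _ List.prefix_rfl hlarge

lemma UMeasurable.of_symmDiff_subset {X M N : Set (ℕ → A)} (hM : UMeasurable U M)
    (hN : UNull U N) (h : X ∆ M ⊆ N) : UMeasurable U X := by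
  intro σ
  obtain ⟨S, hS, hSN⟩ := hN σ
  rcases hM σ with ⟨T, hT, hTM⟩ | hsmall
  · refine Or.inl ⟨T ∩ S, hT.inter hS, ?_⟩
    rw [branches_inter]
    rintro s ⟨hsT, hsS⟩
    by_contra hsX
    exact hSN.subset ⟨hsS, h (Or.inr ⟨hTM hsT, hsX⟩)⟩
  · refine Or.inr ((hsmall.union ⟨S, hS, hSN⟩).mono fun s hsX => ?_)
    by_cases hsM : app σ s ∈ M
    · exact Or.inl hsM
    · exact Or.inr (h (Or.inl ⟨hsX, hsM⟩))

theorem uMeasurable_iff_uNull_diff_uInterior {X : Set (ℕ → A)} :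
    UMeasurable U X ↔ UNull U (X \ uInterior U X) := by
  refine ⟨fun hX σ => ?_, fun h => (uMeasurable_uInterior X).of_symmDiff_subset h ?_⟩
  · rcases hX σ with ⟨T, hT, hTX⟩ | hsmall
    · exact ⟨T, hT, eq_empty_of_subset_empty fun s hs => hs.2.2 (app_mem_uInterior hT hTX hs.1)⟩
    · exact hsmall.mono fun s hs => hs.1
  · rw [symmDiff_of_ge (uInterior_subset X)]

lemma uSmall_iff_uLarge_compl {X : Set (ℕ → A)} : USmall U X ↔ ULarge U Xᶜ :=
  exists_congr fun _ => and_congr_right fun _ => by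
    rw [subset_compl_iff_disjoint_right, disjoint_iff_inter_eq_empty]

lemma UMeasurable.compl {X : Set (ℕ → A)} (hX : UMeasurable U X) : UMeasurable U Xᶜ :=
  fun σ => (hX σ).symm.imp uSmall_iff_uLarge_compl.1
    fun h => uSmall_iff_uLarge_compl.2 (compl_compl (sect X σ) ▸ h)

lemma UMeasurable.iUnion {X : ℕ → Set (ℕ → A)} (hX : ∀ n, UMeasurable U (X n)) :
    UMeasurable U (⋃ n, X n) := by
  simp only [uMeasurable_iff_uNull_diff_uInterior] at hX ⊢
  refine (UNull.iUnion hX).mono ?_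
  rintro s ⟨hs, hsi⟩
  obtain ⟨n, hn⟩ := mem_iUnion.1 hs
  exact mem_iUnion.2 ⟨n, hn, fun h => hsi (uInterior_mono (subset_iUnion X n) h)⟩

abbrev uMeasurableSpace (U : Ultrafilter A) : MeasurableSpace (ℕ → A) where
  MeasurableSet' := UMeasurable U
  measurableSet_empty _ := Or.inr (uNull_empty _)
  measurableSet_compl _ := UMeasurable.compl
  measurableSet_iUnion _ := UMeasurable.iUnion

/-- `H` is the complement of the interior of `Xᶜ`: a measurable `Z ⊆ H` disjoint from `X`
then has empty interior, so `Z` is null. -/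
theorem exists_uMeasurable_hull {X M : Set (ℕ → A)} (hXM : X ⊆ M) (hM : UMeasurable U M) :
    ∃ H ⊆ M, X ⊆ H ∧ UMeasurable U H ∧
      ∀ Z ⊆ H, UMeasurable U Z → Disjoint Z X → UNull U Z := by
  refine ⟨M ∩ (uInterior U Xᶜ)ᶜ, inter_subset_left,
    subset_inter hXM fun t ht hti => uInterior_subset _ hti ht,
    MeasurableSet.inter (m := uMeasurableSpace U) hM (uMeasurable_uInterior _).compl,
    fun Z hZH hZ hZX => ?_⟩
  have hint : uInterior U Z = ∅ := eq_empty_of_subset_empty fun t ht =>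
    (hZH (uInterior_subset Z ht)).2 (uInterior_mono hZX.subset_compl_right ht)
  simpa [hint] using uMeasurable_iff_uNull_diff_uInterior.1 hZ

end Measurable

section Suslin

variable {α : Type*}

def suslin (P : List ℕ → Set α) : Set α := ⋃ f : ℕ → ℕ, ⋂ n, P (seg f n)

def suslinFrom (P : List ℕ → Set α) (τ : List ℕ) : Set α :=
  {x | ∃ f : ℕ → ℕ, seg f τ.length = τ ∧ ∀ n, x ∈ P (seg f n)}

lemma suslinFrom_nil (P : List ℕ → Set α) : suslinFrom P [] = suslin P := by
  ext x
  simp [suslinFrom, suslin, seg]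

lemma suslinFrom_subset (P : List ℕ → Set α) (τ : List ℕ) : suslinFrom P τ ⊆ P τ := by
  rintro x ⟨f, hf, hx⟩
  exact hf ▸ hx τ.length

lemma suslinFrom_subset_iUnion (P : List ℕ → Set α) (τ : List ℕ) :
    suslinFrom P τ ⊆ ⋃ k, suslinFrom P (τ ++ [k]) := by
  rintro x ⟨f, hf, hx⟩
  refine mem_iUnion.2 ⟨f τ.length, f, ?_, hx⟩
  rw [List.length_append, List.length_singleton, seg_succ, hf]

lemma suslin_mono {P Q : List ℕ → Set α} (h : ∀ τ, P τ ⊆ Q τ) : suslin P ⊆ suslin Q :=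
  iUnion_mono fun _ => iInter_mono fun _ => h _

lemma diff_iUnion_diff_subset_suslin (P : List ℕ → Set α) :
    P [] \ ⋃ τ, (P τ \ ⋃ k, P (τ ++ [k])) ⊆ suslin P := by
  rintro x ⟨hx₀, hx⟩
  have step : ∀ τ, x ∈ P τ → ∃ k, x ∈ P (τ ++ [k]) := fun τ hτ => by
    by_contra h
    exact hx (mem_iUnion.2 ⟨τ, hτ, by simpa using h⟩)
  obtain ⟨f, hf⟩ := exists_seq_forall_seg (C := (x ∈ P ·)) hx₀ step
  exact mem_iUnion.2 ⟨f, mem_iInter.2 hf⟩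

end Suslin

end UMeas

open UMeas Set in
/-- The `U`-measurable sets are closed under Suslin's operation A. -/
theorem stmt8 {A : Type u} (U : Ultrafilter A) (P : List ℕ → Set (ℕ → A))
    (hP : ∀ σ : List ℕ, UMeas.UMeasurable U (P σ)) :
    UMeas.UMeasurable U (⋃ f : ℕ → ℕ, ⋂ n : ℕ, P (UMeas.seg f n)) := by
  change UMeasurable U (suslin P)
  choose H hHP hkerH hH hHnull using fun τ =>
    exists_uMeasurable_hull (suslinFrom_subset P τ) (hP τ)
  have hD : ∀ τ, UNull U (H τ \ ⋃ k, H (τ ++ [k])) := fun τ =>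
    hHnull τ _ sdiff_subset
      (MeasurableSet.diff (m := uMeasurableSpace U) (hH τ) (MeasurableSet.iUnion fun k => hH _))
      (disjoint_sdiff_left.mono_right
        ((suslinFrom_subset_iUnion P τ).trans (iUnion_mono fun k => hkerH _)))
  have hsub : suslin P ⊆ H [] := suslinFrom_nil P ▸ hkerH []
  refine (hH []).of_symmDiff_subset (UNull.iUnion hD) ?_
  rw [symmDiff_of_le hsub, sdiff_subset_comm]
  exact (diff_iUnion_diff_subset_suslin H).trans (suslin_mono hHP)
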